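/- For all integers 0 ≤ l ≤ k and 0 ≤ m ≤ n, the Lie bracket satisfies [Θ^l_k, Θ^m_n] = 0; that is, the family of vector fields Θ^m_n is pairwise commuting. -/
import Mathlib


noncomputable section
open MvPolynomial

/-- Polynomial functions of the variables x, y, z (indexed `0, 1, 2`). -/
abbrev Poly3 := MvPolynomial (Fin 3) ℝ

/-- Polynomial vector fields on ℝ³, given by their three components. -/
abbrev VF3 := Fin 3 → Poly3

/-- The derivation action `v(g) = v₁ ∂g/∂x + v₂ ∂g/∂y + v₃ ∂g/∂z`. -/
def applyVF (v : VF3) (g : Poly3) : Poly3 := ∑ i, v i * pderiv i g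

/-- The Lie bracket `[v,w] := v∘w − w∘v`, with i-th component `v(wᵢ) − w(vᵢ)`. -/
def bracket (v w : VF3) : VF3 := fun i => applyVF v (w i) - applyVF w (v i)

/-- The divergence `div v = ∂v₁/∂x + ∂v₂/∂y + ∂v₃/∂z`. -/
def divergence (v : VF3) : Poly3 := ∑ i, pderiv i (v i)

/-- The vector field `F^l_k := x^l (y²+z²)^{k−l} ((k−l+1) x ∂_x − ((l+1)/2) y ∂_y − ((l+1)/2) z ∂_z)`
for integers `−1 ≤ l ≤ k`; for `l = −1` the second and third components vanish and this is
`(k+2)(y²+z²)^{k+1} ∂_x`. -/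
def Fvf (l k : ℤ) : VF3 :=
  ![C ((k - l + 1 : ℤ) : ℝ) * X 0 ^ (l + 1).toNat * (X 1 ^ 2 + X 2 ^ 2) ^ (k - l).toNat,
    C (-((l + 1 : ℤ) : ℝ) / 2) * X 0 ^ l.toNat * X 1 * (X 1 ^ 2 + X 2 ^ 2) ^ (k - l).toNat,
    C (-((l + 1 : ℤ) : ℝ) / 2) * X 0 ^ l.toNat * X 2 * (X 1 ^ 2 + X 2 ^ 2) ^ (k - l).toNat]

/-- The vector field `Θ^m_n := x^m (y²+z²)^{n−m} (z ∂_y − y ∂_z)` for integers `0 ≤ m ≤ n`. -/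
def Tvf (m n : ℤ) : VF3 :=
  ![0,
    X 0 ^ m.toNat * (X 1 ^ 2 + X 2 ^ 2) ^ (n - m).toNat * X 2,
    -(X 0 ^ m.toNat * (X 1 ^ 2 + X 2 ^ 2) ^ (n - m).toNat * X 1)]

/-- the vector fields `Θ^m_n` are pairwise commuting:
`[Θ^l_k, Θ^m_n] = 0` for all `0 ≤ l ≤ k` and `0 ≤ m ≤ n`. -/
theorem bracket_Theta_Theta (l k m n : ℤ) (h1 : 0 ≤ l) (h2 : l ≤ k) (h3 : 0 ≤ m) (h4 : m ≤ n) :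
    bracket (Tvf l k) (Tvf m n) = 0 := by
  funext i
  fin_cases i <;>
  · simp only [bracket, Tvf, applyVF, Fin.sum_univ_three, Matrix.cons_val_zero,
      Matrix.cons_val_one, Matrix.head_cons, Matrix.cons_val_two, Matrix.tail_cons,
      Fin.zero_eta, Fin.mk_one, Fin.reduceFinMk, map_zero, map_neg, map_mul, map_add, Derivation.leibniz, Derivation.leibniz_pow,
      pderiv_X_self, pderiv_X_of_ne (by decide : (1:Fin 3) ≠ 0),
      pderiv_X_of_ne (by decide : (2:Fin 3) ≠ 0),
      pderiv_X_of_ne (by decide : (0:Fin 3) ≠ 1),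
      pderiv_X_of_ne (by decide : (2:Fin 3) ≠ 1),
      pderiv_X_of_ne (by decide : (0:Fin 3) ≠ 2),
      pderiv_X_of_ne (by decide : (1:Fin 3) ≠ 2),
      smul_eq_mul, mul_zero, zero_mul, mul_one, add_zero, zero_add, Pi.zero_apply]
    ring
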